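/- Let C = GRS_k(a,v) be a generalized Reed–Solomon code of length n ≤ q and dimension k over F_q that is e-Galois self-orthogonal, where 0 ≤ e ≤ h−1 (so its minimum distance is d = n − k + 1). Then there exists a linear code C_1' in F_q^{n+1} of dimension k with dim(Hull_e(C_1')) = k−1 that is MDS, i.e., its minimum distance equals n + 2 − k = d + 1. -/

import Mathlib

open Finset

variable {F : Type*}

/-- The `e`-Galois dual of a linear code `C ⊆ F_q^n` (`q = p^h`):
`C^{⊥_e} = {x | ∀ c ∈ C, ∑ i, x i * (c i)^(p^e) = 0}`. -/
def galoisDual [Field F] (p e : ℕ) {n : ℕ} (C : Submodule F (Fin n → F)) :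
    Submodule F (Fin n → F) where
  carrier := {x | ∀ c ∈ C, ∑ i, x i * c i ^ p ^ e = 0}
  add_mem' := by
    intro a b ha hb c hc
    have h1 := ha c hc
    have h2 := hb c hc
    simp only [Pi.add_apply, add_mul, Finset.sum_add_distrib, h1, h2, add_zero]
  zero_mem' := by
    intro c hc
    simp
  smul_mem' := by
    intro r a ha c hc
    have h1 := ha c hc
    simp only [Pi.smul_apply, smul_eq_mul, mul_assoc, ← Finset.mul_sum, h1, mul_zero]

/-- The `e`-Galois hull of `C`: `Hull_e(C) = C ∩ C^{⊥_e}`. -/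
def galoisHull [Field F] (p e : ℕ) {n : ℕ} (C : Submodule F (Fin n → F)) :
    Submodule F (Fin n → F) :=
  C ⊓ galoisDual p e C

/-- `G` is a generator matrix of `C`: its rows form a basis of `C`. -/
def IsGenMatrix [Field F] {n k : ℕ} (C : Submodule F (Fin n → F))
    (G : Matrix (Fin k) (Fin n) F) : Prop :=
  LinearIndependent F (fun i : Fin k => G i) ∧
    Submodule.span F (Set.range fun i : Fin k => G i) = C

/-- `d` is the minimum (Hamming) distance of the linear code `C`. -/
def IsMinDist [Field F] [DecidableEq F] {n : ℕ} (C : Submodule F (Fin n → F)) (d : ℕ) : Prop :=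
  (∃ c ∈ C, c ≠ 0 ∧ hammingNorm c = d) ∧ ∀ c ∈ C, c ≠ 0 → d ≤ hammingNorm c

/-- The generalized Reed–Solomon code `GRS_k(a, v) ⊆ F^n`:
all words `(v₁ f(a₁), …, v_n f(a_n))` with `deg f ≤ k - 1`. -/
noncomputable def GRSCode [Field F] {n : ℕ} (a v : Fin n → F) (k : ℕ) :
    Submodule F (Fin n → F) :=
  Submodule.map (LinearMap.pi fun i => v i • Polynomial.leval (a i))
    (Polynomial.degreeLT F k)

/-! The code is `GRS_k(a, v)` extended by the coefficient of `X ^ (k - 1)`, i.e. the image of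
`f ↦ (v₁ f(a₁), …, v_n f(a_n), f_{k-1})` on polynomials of degree `< k`. Self-orthogonality of the
GRS part reduces the `e`-Galois pairing of the words of `f` and `g` to `f_{k-1} g_{k-1}^{p^e}`, so
the hull is the image of the polynomials of degree `< k - 1`, of dimension `k - 1`. A nonzero `f`
vanishes at most at `deg f` of the `a_i`, and the last coordinate vanishes only if `deg f < k - 1`;
either way at most `k - 1` coordinates vanish, and `∏_{j ∈ s} (X - a_j)` with `#s = k - 1` attains
this bound. -/

open Polynomial

theorem hammingNorm_snoc {β : Type*} [Zero β] [DecidableEq β] {n : ℕ} (x : Fin n → β) (y : β) :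
    hammingNorm (Fin.snoc x y : Fin (n + 1) → β) = hammingNorm x + if y = 0 then 0 else 1 := by
  simp only [hammingNorm, Finset.card_filter, Fin.sum_univ_castSucc, Fin.snoc_castSucc,
    Fin.snoc_last, ite_not]

theorem hammingNorm_add_card_filter_eq_zero {ι β : Type*} [Fintype ι] [Zero β] [DecidableEq β]
    (x : ι → β) : hammingNorm x + #{i | x i = 0} = Fintype.card ι := by
  rw [add_comm, hammingNorm, Finset.card_filter_add_card_filter_not, Finset.card_univ]

theorem card_filter_eval_eq_zero_le_natDegree {ι : Type*} [Fintype ι] [Field F] [DecidableEq F]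
    {a : ι → F} (ha : Function.Injective a) {f : F[X]} (hf : f ≠ 0) :
    #{i | f.eval (a i) = 0} ≤ f.natDegree := by
  rw [← Finset.card_image_of_injective _ ha]
  refine card_le_degree_of_subset_roots fun x hx => ?_
  obtain ⟨i, hi, rfl⟩ := Finset.mem_image.1 hx
  exact (mem_roots hf).2 (Finset.mem_filter.1 hi).2

theorem mem_degreeLT_pred_of_coeff_eq_zero [Semiring F] {k : ℕ} {f : F[X]}
    (hf : f ∈ degreeLT F k) (hc : f.coeff (k - 1) = 0) : f ∈ degreeLT F (k - 1) := by
  rw [mem_degreeLT, degree_lt_iff_coeff_zero] at hf ⊢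
  intro j hj
  rcases eq_or_ne j (k - 1) with rfl | hne
  · exact hc
  · exact hf j (by omega)

section ExtendedGRS

variable [Field F] {n : ℕ} (a v : Fin n → F) (k : ℕ)

noncomputable def extendedGRSMap : F[X] →ₗ[F] (Fin (n + 1) → F) where
  toFun f := Fin.snoc (fun i => v i * f.eval (a i)) (f.coeff (k - 1))
  map_add' f g := by
    ext i
    refine Fin.lastCases ?_ (fun j => ?_) i <;> simp [mul_add]
  map_smul' c f := by
    ext i
    refine Fin.lastCases ?_ (fun j => ?_) i <;> simp [mul_left_comm]

noncomputable def extendedGRSCode : Submodule F (Fin (n + 1) → F) :=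
  (degreeLT F k).map (extendedGRSMap a v k)

variable {a v k}

theorem extendedGRSMap_apply (f : F[X]) :
    extendedGRSMap a v k f = Fin.snoc (fun i => v i * f.eval (a i)) (f.coeff (k - 1)) :=
  rfl

@[simp]
theorem extendedGRSMap_castSucc (f : F[X]) (i : Fin n) :
    extendedGRSMap a v k f i.castSucc = v i * f.eval (a i) :=
  Fin.snoc_castSucc (α := fun _ => F) (p := fun i => v i * f.eval (a i)) ..

@[simp]
theorem extendedGRSMap_last (f : F[X]) : extendedGRSMap a v k f (Fin.last n) = f.coeff (k - 1) :=
  Fin.snoc_last (α := fun _ => F) (p := fun i => v i * f.eval (a i)) ..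

theorem hammingNorm_mul_eval_add_card_filter_eval_eq_zero [DecidableEq F] (hv : ∀ i, v i ≠ 0)
    (f : F[X]) : hammingNorm (fun i => v i * f.eval (a i)) + #{i | f.eval (a i) = 0} = n := by
  simpa [hv] using hammingNorm_add_card_filter_eq_zero fun i => v i * f.eval (a i)

theorem finrank_map_extendedGRSMap_degreeLT (ha : Function.Injective a) (hv : ∀ i, v i ≠ 0)
    {m : ℕ} (hm : m ≤ n) : Module.finrank F ((degreeLT F m).map (extendedGRSMap a v k)) = m := by
  have hinj : Function.Injective (extendedGRSMap a v k ∘ₗ (degreeLT F m).subtype) := by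
    rw [← LinearMap.ker_eq_bot, LinearMap.ker_eq_bot']
    rintro ⟨f, hf⟩ hf0
    have heval (i : Fin n) : f.eval (a i) = 0 := by
      simpa [hv i] using congrFun hf0 i.castSucc
    by_contra hne
    have hf' : f ≠ 0 := fun h => hne (Subtype.ext h)
    have hdeg : f.natDegree < m := (natDegree_lt_iff_degree_lt hf').2 (mem_degreeLT.1 hf)
    exact hf' <| eq_zero_of_natDegree_lt_card_of_eval_eq_zero f ha heval
      (by rw [Fintype.card_fin]; omega)
  rw [← Submodule.range_subtype (degreeLT F m), ← LinearMap.range_comp,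
    LinearMap.finrank_range_of_inj hinj, (degreeLTEquiv F m).finrank_eq, Module.finrank_fin_fun]

theorem sum_extendedGRSMap_mul_pow {p e : ℕ}
    (hso : GRSCode a v k ≤ galoisDual p e (GRSCode a v k))
    {f g : F[X]} (hf : f ∈ degreeLT F k) (hg : g ∈ degreeLT F k) :
    ∑ i, extendedGRSMap a v k f i * extendedGRSMap a v k g i ^ p ^ e =
      f.coeff (k - 1) * g.coeff (k - 1) ^ p ^ e := by
  have mem_GRSCode {f : F[X]} (hf : f ∈ degreeLT F k) :
      (fun i => v i * f.eval (a i)) ∈ GRSCode a v k :=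
    ⟨f, hf, by ext i; simp⟩
  rw [Fin.sum_univ_castSucc]
  simp only [extendedGRSMap_castSucc, extendedGRSMap_last]
  rw [hso (mem_GRSCode hf) _ (mem_GRSCode hg), zero_add]

theorem galoisHull_extendedGRSCode {p e : ℕ}
    (hso : GRSCode a v k ≤ galoisDual p e (GRSCode a v k)) (hk : 1 ≤ k) :
    galoisHull p e (extendedGRSCode a v k) = (degreeLT F (k - 1)).map (extendedGRSMap a v k) := by
  apply le_antisymm
  · rintro _ ⟨⟨f, hf, rfl⟩, hdual⟩
    have hX : (X ^ (k - 1) : F[X]) ∈ degreeLT F k := by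
      rw [mem_degreeLT, degree_X_pow]
      exact_mod_cast Nat.sub_lt hk one_pos
    have hc := hdual _ ⟨_, hX, rfl⟩
    rw [sum_extendedGRSMap_mul_pow hso hf hX, coeff_X_pow_self, one_pow, mul_one] at hc
    exact ⟨f, mem_degreeLT_pred_of_coeff_eq_zero hf hc, rfl⟩
  · rintro _ ⟨f, hf, rfl⟩
    have hf' : f ∈ degreeLT F k := degreeLT_mono (Nat.sub_le k 1) hf
    refine ⟨⟨f, hf', rfl⟩, ?_⟩
    rintro _ ⟨g, hg, rfl⟩
    rw [sum_extendedGRSMap_mul_pow hso hf' hg,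
      coeff_eq_zero_of_degree_lt (mem_degreeLT.1 hf), zero_mul]

variable [DecidableEq F]

theorem hammingNorm_extendedGRSMap (hv : ∀ i, v i ≠ 0) (f : F[X]) :
    hammingNorm (extendedGRSMap a v k f) + #{i | f.eval (a i) = 0} =
      n + if f.coeff (k - 1) = 0 then 0 else 1 := by
  rw [extendedGRSMap_apply, hammingNorm_snoc, add_right_comm,
    hammingNorm_mul_eval_add_card_filter_eval_eq_zero hv]

theorem le_hammingNorm_of_mem_extendedGRSCode (ha : Function.Injective a) (hv : ∀ i, v i ≠ 0)
    {c : Fin (n + 1) → F} (hc : c ∈ extendedGRSCode a v k) (hc0 : c ≠ 0) :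
    n + 2 - k ≤ hammingNorm c := by
  obtain ⟨f, hf, rfl⟩ := hc
  have hf0 : f ≠ 0 := by rintro rfl; exact hc0 (map_zero _)
  have hweight := hammingNorm_extendedGRSMap (a := a) (k := k) hv f
  have hzeros := card_filter_eval_eq_zero_le_natDegree ha hf0
  have hdeg : f.natDegree < k := (natDegree_lt_iff_degree_lt hf0).2 (mem_degreeLT.1 hf)
  by_cases hlead : f.coeff (k - 1) = 0
  · have hdeg' : f.natDegree < k - 1 := (natDegree_lt_iff_degree_lt hf0).2
      (mem_degreeLT.1 (mem_degreeLT_pred_of_coeff_eq_zero hf hlead))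
    rw [if_pos hlead] at hweight
    omega
  · rw [if_neg hlead] at hweight
    omega

theorem exists_mem_extendedGRSCode_hammingNorm_eq (ha : Function.Injective a)
    (hv : ∀ i, v i ≠ 0) (hk : 1 ≤ k) (hkn : k ≤ n) :
    ∃ c ∈ extendedGRSCode a v k, c ≠ 0 ∧ hammingNorm c = n + 2 - k := by
  obtain ⟨s, -, hs⟩ := Finset.exists_subset_card_eq (s := (univ : Finset (Fin n))) (n := k - 1)
    (by simp; omega)
  set f : F[X] := ∏ j ∈ s, (X - C (a j))
  have hmonic : f.Monic := monic_prod_of_monic _ _ fun j _ => monic_X_sub_C (a j)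
  have hdeg : f.natDegree = k - 1 := by simp [f, hs]
  have hlead : f.coeff (k - 1) = 1 := hdeg ▸ hmonic.coeff_natDegree
  have hzeros : ({i | f.eval (a i) = 0} : Finset (Fin n)) = s := by
    ext i
    simp [f, eval_prod, Finset.prod_eq_zero_iff, sub_eq_zero, ha.eq_iff]
  have hf : f ∈ degreeLT F k := by
    rw [mem_degreeLT, degree_eq_natDegree hmonic.ne_zero, hdeg]
    exact_mod_cast Nat.sub_lt hk one_pos
  refine ⟨_, ⟨f, hf, rfl⟩, fun h0 => ?_, ?_⟩
  · simpa [hlead] using congrFun h0 (Fin.last n)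
  · have hweight := hammingNorm_extendedGRSMap (a := a) (k := k) hv f
    rw [hzeros, hs, hlead, if_neg one_ne_zero] at hweight
    omega

theorem isMinDist_extendedGRSCode (ha : Function.Injective a) (hv : ∀ i, v i ≠ 0) (hk : 1 ≤ k)
    (hkn : k ≤ n) : IsMinDist (extendedGRSCode a v k) (n + 2 - k) :=
  ⟨exists_mem_extendedGRSCode_hammingNorm_eq ha hv hk hkn,
    fun _ hc hc0 => le_hammingNorm_of_mem_extendedGRSCode ha hv hc hc0⟩

end ExtendedGRS

theorem exists_MDS_length_succ_hull_dim_pred_of_GRS_general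
    (p : ℕ)
    [Field F] [DecidableEq F]
    (n k e : ℕ)
    (hk1 : 1 ≤ k) (hkn : k ≤ n)
    (a v : Fin n → F) (ha : Function.Injective a) (hv : ∀ i, v i ≠ 0)
    (hso : GRSCode a v k ≤ galoisDual p e (GRSCode a v k)) :
    ∃ C₁ : Submodule F (Fin (n + 1) → F),
      Module.finrank F C₁ = k ∧
        Module.finrank F (galoisHull p e C₁) = k - 1 ∧
          IsMinDist C₁ (n + 2 - k) := by
  refine ⟨extendedGRSCode a v k, finrank_map_extendedGRSMap_degreeLT ha hv hkn, ?_,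
    isMinDist_extendedGRSCode ha hv hk1 hkn⟩
  rw [galoisHull_extendedGRSCode hso hk1]
  exact finrank_map_extendedGRSMap_degreeLT ha hv (by omega)

/-- Theorem: if `GRS_k(a,v)` (length `n ≤ q`, dimension `k`) is `e`-Galois self-orthogonal,
then there exists an `[n+1, k]_q` code with `(k-1)`-dimensional `e`-Galois hull which is MDS,
i.e. of minimum distance `n + 2 - k`. -/
theorem exists_MDS_length_succ_hull_dim_pred_of_GRS
    (p h : ℕ) (hp : p.Prime) (hh : 0 < h)
    [Field F] [Fintype F] [DecidableEq F] (hcard : Fintype.card F = p ^ h)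
    (n k e : ℕ) (he : e ≤ h - 1)
    (hn : n ≤ p ^ h) (hk1 : 1 ≤ k) (hkn : k ≤ n)
    (a v : Fin n → F) (ha : Function.Injective a) (hv : ∀ i, v i ≠ 0)
    (hso : GRSCode a v k ≤ galoisDual p e (GRSCode a v k)) :
    ∃ C₁ : Submodule F (Fin (n + 1) → F),
      Module.finrank F C₁ = k ∧
        Module.finrank F (galoisHull p e C₁) = k - 1 ∧
          IsMinDist C₁ (n + 2 - k) :=
  exists_MDS_length_succ_hull_dim_pred_of_GRS_general p n k e hk1 hkn a v ha hv hso
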